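/- Let A and B be groups, G = A ∗ B, N = Ker(A ∗ B → A × B). Suppose z ∈ A∖{e} satisfies z² = e, and suppose there exists h ∈ N with zhz = zhz⁻¹ and h not commuting with zhz. Set x = h·(zhz)·h⁻¹·(zh⁻¹z) ∈ [N,N]. Then zxz = x⁻¹, and consequently for every n ∈ ℤ, x^{2n} = [z, x^{-n}]; in particular cl_{G,N}(x^{2n}) ≤ 1 for all n ≥ 1 and scl_{G,N}(x) = 0. -/

import Mathlib

/-!
Since `ζ` is an involution, conjugating `x = ⁅h, ζhζ⁆` by `ζ` swaps the roles of `h` and `ζhζ`,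
so `ζxζ = ⁅ζhζ, h⁆ = x⁻¹`. Hence `ζ x⁻ⁿ ζ⁻¹ = xⁿ` and `x²ⁿ = ⁅ζ, x⁻ⁿ⁆` is a single
`(G,N)`-commutator; odd powers need one more commutator, `x` itself. So `cl_{G,N}(xⁿ) ≤ 2`
for all `n`, and the stable commutator length vanishes.
-/

open Filter Topology
open scoped commutatorElement

section

variable {G : Type*} [Group G]

def IsCommProd (N : Subgroup G) (m : ℕ) (x : G) : Prop :=
  ∃ c : Fin m → G, (∀ i, ∃ g h : G, h ∈ N ∧ c i = g * h * g⁻¹ * h⁻¹) ∧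
    (List.ofFn c).prod = x

noncomputable def clGN (N : Subgroup G) (x : G) : ℕ :=
  sInf {m | IsCommProd N m x}

namespace IsCommProd

variable {N : Subgroup G}

theorem commutatorElement (g : G) {h : G} (hh : h ∈ N) : IsCommProd N 1 ⁅g, h⁆ :=
  ⟨![⁅g, h⁆], fun _ => ⟨g, h, hh, by simp [commutatorElement_def]⟩, by simp⟩

theorem mul {m k : ℕ} {x y : G} (hx : IsCommProd N m x) (hy : IsCommProd N k y) :
    IsCommProd N (m + k) (x * y) := by
  obtain ⟨c, hc, rfl⟩ := hx
  obtain ⟨d, hd, rfl⟩ := hy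
  refine ⟨Fin.append c d, fun i => ?_, by rw [List.ofFn_fin_append, List.prod_append]⟩
  induction i using Fin.addCases with
  | left i => simpa using hc i
  | right i => simpa using hd i

theorem clGN_le {m : ℕ} {x : G} (hx : IsCommProd N m x) : clGN N x ≤ m :=
  Nat.sInf_le hx

end IsCommProd

theorem conj_commutatorElement_conj_eq_inv {ζ : G} (hζ : ζ * ζ = 1) (h : G) :
    ζ * ⁅h, ζ * h * ζ⁆ * ζ⁻¹ = ⁅h, ζ * h * ζ⁆⁻¹ := by
  have hinv : ζ⁻¹ = ζ := inv_eq_of_mul_eq_one_right hζ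
  simp only [commutatorElement_def, mul_inv_rev, hinv, inv_inv, mul_assoc, hζ, mul_one]

theorem zpow_two_mul_eq_commutatorElement {ζ x : G} (hx : ζ * x * ζ⁻¹ = x⁻¹) (n : ℤ) :
    x ^ (2 * n) = ⁅ζ, x ^ (-n)⁆ := by
  have hconj : ζ * x ^ (-n) * ζ⁻¹ = x ^ n := by
    rw [← conj_zpow, hx, inv_zpow, zpow_neg, inv_inv]
  rw [commutatorElement_def, hconj, zpow_neg, inv_inv, ← zpow_add, two_mul]

variable {N : Subgroup G} {ζ x : G}

theorem isCommProd_pow_two_mul (hx : ζ * x * ζ⁻¹ = x⁻¹) (hxN : x ∈ N) (n : ℕ) :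
    IsCommProd N 1 (x ^ (2 * n)) := by
  have := zpow_two_mul_eq_commutatorElement hx n
  rw [← Nat.cast_ofNat, ← Nat.cast_mul, zpow_natCast] at this
  exact this ▸ IsCommProd.commutatorElement ζ (N.zpow_mem hxN _)

theorem clGN_pow_le_two (hx : ζ * x * ζ⁻¹ = x⁻¹) (hxN : x ∈ N) (hx₁ : IsCommProd N 1 x)
    (n : ℕ) : clGN N (x ^ n) ≤ 2 := by
  obtain ⟨m, rfl | rfl⟩ := Nat.even_or_odd' n
  · exact (isCommProd_pow_two_mul hx hxN m).clGN_le.trans one_le_two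
  · rw [pow_succ]
    exact ((isCommProd_pow_two_mul hx hxN m).mul hx₁).clGN_le

end

theorem tendsto_natCast_div_atTop_of_le {f : ℕ → ℕ} {C : ℕ} (hf : ∀ n, f n ≤ C) :
    Tendsto (fun n : ℕ => (f n : ℝ) / n) atTop (𝓝 0) := by
  refine squeeze_zero (fun n => by positivity) (fun n => ?_)
    (tendsto_const_div_atTop_nhds_zero_nat (C : ℝ))
  gcongr
  exact_mod_cast hf n

variable (A B : Type*) [Group A] [Group B]

def canonicalSurj : Monoid.Coprod A B →* A × B :=
  Monoid.Coprod.lift (MonoidHom.inl A B) (MonoidHom.inr A B)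

theorem involution_scl_zero (z : A) (hz2 : z * z = 1)
    (h : Monoid.Coprod A B) (hh : h ∈ (canonicalSurj A B).ker) :
    let ζ : Monoid.Coprod A B := Monoid.Coprod.inl z
    let x : Monoid.Coprod A B := h * (ζ * h * ζ) * h⁻¹ * (ζ * h⁻¹ * ζ)
    x ∈ ⁅((canonicalSurj A B).ker : Subgroup (Monoid.Coprod A B)),
        (canonicalSurj A B).ker⁆ ∧
      ζ * x * ζ = x⁻¹ ∧
      (∀ n : ℤ, x ^ (2 * n) = ⁅ζ, x ^ (-n)⁆) ∧
      (∀ n : ℕ, 1 ≤ n → clGN (canonicalSurj A B).ker (x ^ (2 * n)) ≤ 1) ∧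
      Tendsto (fun n : ℕ => (clGN (canonicalSurj A B).ker (x ^ n) : ℝ) / n)
        atTop (𝓝 0) := by
  intro ζ x
  set N := (canonicalSurj A B).ker
  have hζ : ζ * ζ = 1 := by rw [← map_mul, hz2, map_one]
  have hζinv : ζ⁻¹ = ζ := inv_eq_of_mul_eq_one_right hζ
  have hconjN : ζ * h * ζ ∈ N := by
    simpa only [hζinv] using (canonicalSurj A B).normal_ker.conj_mem h hh ζ
  have hx : x = ⁅h, ζ * h * ζ⁆ := by
    simp only [x, commutatorElement_def, mul_inv_rev, hζinv, mul_assoc]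
  have hxNN : x ∈ ⁅N, N⁆ := hx ▸ Subgroup.commutator_mem_commutator hh hconjN
  have hxN : x ∈ N := Subgroup.commutator_le_left N N hxNN
  have hconj : ζ * x * ζ⁻¹ = x⁻¹ := hx ▸ conj_commutatorElement_conj_eq_inv hζ h
  have hx₁ : IsCommProd N 1 x := hx ▸ IsCommProd.commutatorElement h hconjN
  exact ⟨hxNN, by simpa only [hζinv] using hconj, zpow_two_mul_eq_commutatorElement hconj,
    fun n _ => (isCommProd_pow_two_mul hconj hxN n).clGN_le,
    tendsto_natCast_div_atTop_of_le (clGN_pow_le_two hconj hxN hx₁)⟩
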